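/- arXiv:2301.05476 — 2 statements merged into one kernel-verified Lean document; each statement's English description precedes it below -/
import Mathlib

section
/- Let Q be a finite quiver, let D = dA with d ≥ 2 and A ≥ 1, and let ρ be a set of paths of Q satisfying the (D,A)-overlap property and such that for every m ≥ 2 every element of R^m has length Aδ(m) (as holds when the monomial algebra KQ/(ρ) is (D,A)-stacked). Then for every n ≥ 2 and every R ∈ R^n, R is an A-path; writing R = α_1⋯α_{δ(n)} with each α_i ∈ Q_A, the A-subpaths α_i⋯α_{i+d-1} for 1 ≤ i ≤ δ(n)−d+1 all belong to ρ, and no subpath of R of length D other than these belongs to ρ. -/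
open Quiver

universe u v

variable {V : Type u} [Quiver.{v + 1} V]

/-- The type of paths of a quiver, bundled with their endpoints. -/
abbrev SPath (V : Type u) [Quiver.{v + 1} V] := Σ a b : V, Quiver.Path a b

/-- The type of arrows of a quiver, bundled with their endpoints. -/
abbrev SArrow (V : Type u) [Quiver.{v + 1} V] := Σ a b : V, a ⟶ b

/-- A set of paths in a quiver, given as a predicate on paths with arbitrary endpoints. -/
abbrev PathSet (V : Type u) [Quiver.{v + 1} V] := ∀ ⦃a b : V⦄, Quiver.Path a b → Prop

/-- `p` is a prefix of `q`. -/
def IsPrefixP {a b c : V} (p : Quiver.Path a b) (q : Quiver.Path a c) : Prop :=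
  ∃ p' : Quiver.Path b c, q = p.comp p'

/-- `p` is a suffix of `q`. -/
def IsSuffixP {a b c : V} (p : Quiver.Path b c) (q : Quiver.Path a c) : Prop :=
  ∃ p' : Quiver.Path a b, q = p'.comp p

/-- `p` is a subpath of `q`. -/
def IsSubpathP {b c a e : V} (p : Quiver.Path b c) (q : Quiver.Path a e) : Prop :=
  ∃ (u : Quiver.Path a b) (v : Quiver.Path c e), q = (u.comp p).comp v

/-- `q` overlaps `p` with overlap `p.comp u`: there are paths `u`, `v` with
`pu = vq` and `1 ≤ ℓ(u) < ℓ(q)`. -/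
def OverlapsWith {x y a b : V} (q : Quiver.Path x y) (p : Quiver.Path a b)
    (u : Quiver.Path b y) : Prop :=
  ∃ v : Quiver.Path a x, p.comp u = v.comp q ∧ 1 ≤ u.length ∧ u.length < q.length

/-- `q` properly overlaps `p` with overlap `p.comp u`: additionally `ℓ(v) ≥ 1`. -/
def ProperlyOverlapsWith {x y a b : V} (q : Quiver.Path x y) (p : Quiver.Path a b)
    (u : Quiver.Path b y) : Prop :=
  ∃ v : Quiver.Path a x, p.comp u = v.comp q ∧ 1 ≤ u.length ∧ u.length < q.length ∧
    1 ≤ v.length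

/-- `q` properly overlaps `p` (with some overlap). -/
def ProperlyOverlaps {x y a b : V} (q : Quiver.Path x y) (p : Quiver.Path a b) : Prop :=
  ∃ u : Quiver.Path b y, ProperlyOverlapsWith q p u

/-- `ρ` is `d`-covering: whenever `pq ∈ ρ`, `qr ∈ ρ` and `ℓ(q) ≥ 1`, every subpath of
`pqr` of length `d` lies in `ρ`. -/
def DCovering (d : ℕ) (ρ : PathSet V) : Prop :=
  ∀ ⦃a b c e : V⦄ (p : Quiver.Path a b) (q : Quiver.Path b c) (r : Quiver.Path c e),
    ρ (p.comp q) → ρ (q.comp r) → 1 ≤ q.length →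
    ∀ ⦃x y : V⦄ (s : Quiver.Path x y), s.length = d →
      IsSubpathP s ((p.comp q).comp r) → ρ s

/-- The sets `R^n` of (iterated maximal) overlaps: `R^0` = trivial paths, `R^1` = arrows,
`R^2 = ρ`, and for `n ≥ 3`, `R^n` consists of the paths `R^{n-1}u` where
`R^{n-1} = R^{n-2}p ∈ R^{n-1}`, some element of `ρ` overlaps `p` with overlap `pu`,
and no element of `ρ` overlaps `p` with overlap a proper prefix of `pu`. -/
def RSet (ρ : PathSet V) : ℕ → PathSet V
  | 0 => fun _ _ p => p.length = 0
  | 1 => fun _ _ p => p.length = 1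
  | 2 => ρ
  | n + 3 => fun a e R =>
      ∃ (c : V) (Rp : Quiver.Path a c) (u : Quiver.Path c e),
        RSet ρ (n + 2) Rp ∧ R = Rp.comp u ∧
        ∃ (b : V) (Rpp : Quiver.Path a b) (p : Quiver.Path b c),
          RSet ρ (n + 1) Rpp ∧ Rp = Rpp.comp p ∧
          (∃ (x : V) (q : Quiver.Path x e), ρ q ∧ OverlapsWith q p u) ∧
          ∀ (x y : V) (q : Quiver.Path x y) (u' : Quiver.Path c y),
            ρ q → OverlapsWith q p u' →
            ¬(IsPrefixP (p.comp u') (p.comp u) ∧ u'.length < u.length)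

/-- `δ(n) = (n/2)d` if `n` is even, `((n-1)/2)d + 1` if `n` is odd. -/
def deltaF (d n : ℕ) : ℕ := if n % 2 = 0 then n / 2 * d else (n - 1) / 2 * d + 1

/-- The `m`-th power of a closed path. -/
def cpow {a : V} (T : Quiver.Path a a) : ℕ → Quiver.Path a a
  | 0 => Quiver.Path.nil
  | n + 1 => (cpow T n).comp T

/-- The list of arrows of a path, in order. -/
def arrowList {a : V} : ∀ {b : V}, Quiver.Path a b → List (SArrow V)
  | _, Quiver.Path.nil => []
  | _, Quiver.Path.cons p e => arrowList p ++ [⟨_, _, e⟩]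

/-- A closed trail: a nontrivial closed path with pairwise distinct arrows. -/
def IsClosedTrail {a : V} (T : Quiver.Path a a) : Prop :=
  1 ≤ T.length ∧ (arrowList T).Nodup

/-- `q` lies on the closed path `T`: `q` is a subpath of `T^m` for some `m ≥ 1`. -/
def LiesOn {x y a : V} (q : Quiver.Path x y) (T : Quiver.Path a a) : Prop :=
  ∃ m : ℕ, 1 ≤ m ∧ IsSubpathP q (cpow T m)

/-- `ρ_T ⊆ ρ`: every path of length `d` lying on `T` belongs to `ρ`. -/
def RhoTSub (d : ℕ) (ρ : PathSet V) {a : V} (T : Quiver.Path a a) : Prop :=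
  ∀ ⦃x y : V⦄ (q : Quiver.Path x y), q.length = d → LiesOn q T → ρ q

/-- `SegChain A L a b p` : the path `p` decomposes as the composite of the listed
segments, each of length `A`. -/
inductive SegChain (A : ℕ) : List (SPath V) → (a b : V) → Quiver.Path a b → Prop
  | nil (a : V) : SegChain A [] a a Quiver.Path.nil
  | cons {a b c : V} (α : Quiver.Path a b) (hα : α.length = A) {p : Quiver.Path b c}
      {L : List (SPath V)} (hp : SegChain A L b c p) :
      SegChain A (⟨a, b, α⟩ :: L) a c (α.comp p)

/-- An `A`-path: a path which decomposes into segments of length `A`. -/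
def IsAPath (A : ℕ) {a b : V} (p : Quiver.Path a b) : Prop :=
  ∃ L : List (SPath V), SegChain A L a b p

/-- `p` is an `A`-subpath of `q`: a subpath which is an `A`-path starting at a position
that is a multiple of `A`. -/
def IsASubpath (A : ℕ) {b c a e : V} (p : Quiver.Path b c) (q : Quiver.Path a e) : Prop :=
  ∃ (u : Quiver.Path a b) (v : Quiver.Path c e),
    q = (u.comp p).comp v ∧ A ∣ u.length ∧ IsAPath A p

/-- A closed `A`-trail: a nontrivial closed `A`-path with pairwise distinct `A`-segments. -/
def IsClosedATrail (A : ℕ) {a : V} (T : Quiver.Path a a) : Prop :=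
  ∃ L : List (SPath V), SegChain A L a a T ∧ L ≠ [] ∧ L.Nodup

/-- The `A`-path `q` lies on the closed `A`-path `T`: `q` is an `A`-subpath of `T^m` for
some `m ≥ 1`. -/
def ALiesOn (A : ℕ) {x y a : V} (q : Quiver.Path x y) (T : Quiver.Path a a) : Prop :=
  ∃ m : ℕ, 1 ≤ m ∧ IsASubpath A q (cpow T m)

/-- `ρ_T ⊆ ρ` in the `(D,A)`-setting: every path of length `D` which lies on `T` as an
`A`-path belongs to `ρ`. -/
def ARhoTSub (D A : ℕ) (ρ : PathSet V) {a : V} (T : Quiver.Path a a) : Prop :=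
  ∀ ⦃x y : V⦄ (q : Quiver.Path x y), q.length = D → ALiesOn A q T → ρ q

/-- The `(D,A)`-overlap property: every path in `ρ` has length `D`, and whenever
`R₂ ∈ ρ` properly overlaps `R₁ ∈ ρ` with overlap `R₁u`, then `ℓ(u) ≥ A` and some
`R₃ ∈ ρ` properly overlaps `R₁` with overlap `R₁u'` where `ℓ(u') = A` and `u'` is a
prefix of `u`. -/
def DAOverlapProperty (D A : ℕ) (ρ : PathSet V) : Prop :=
  (∀ ⦃a b : V⦄ (p : Quiver.Path a b), ρ p → p.length = D) ∧
  ∀ ⦃a b x y : V⦄ (R₁ : Quiver.Path a b) (R₂ : Quiver.Path x y) (u : Quiver.Path b y),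
    ρ R₁ → ρ R₂ → ProperlyOverlapsWith R₂ R₁ u →
    A ≤ u.length ∧
      ∃ (y' : V) (x' : V) (R₃ : Quiver.Path x' y') (u' : Quiver.Path b y'),
        ρ R₃ ∧ ProperlyOverlapsWith R₃ R₁ u' ∧ u'.length = A ∧ IsPrefixP u' u

/-- Condition (C1), part (1), for a loop `α`. -/
def CondLoop (d : ℕ) (ρ : PathSet V) {v : V} (α : v ⟶ v) : Prop :=
  ρ (cpow (Quiver.Hom.toPath α) d) ∧
  (∀ ⦃w : V⦄ (β : v ⟶ w), (⟨v, w, β⟩ : SArrow V) ≠ ⟨v, v, α⟩ →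
      ¬ ρ ((cpow (Quiver.Hom.toPath α) (d - 1)).comp (Quiver.Hom.toPath β))) ∧
  (∀ ⦃w : V⦄ (β : w ⟶ v), (⟨w, v, β⟩ : SArrow V) ≠ ⟨v, v, α⟩ →
      ¬ ρ ((Quiver.Hom.toPath β).comp (cpow (Quiver.Hom.toPath α) (d - 1))))

/-- Condition (C1): (1) every loop `α` satisfies `α^d ∈ ρ` and no element of `ρ` has the
form `α^{d-1}β` or `βα^{d-1}` with `β` an arrow distinct from `α`; (2) for every closed
trail `T` with `ℓ(T) > 1` and `ρ_T ⊆ ρ`, no element of `ρ∖ρ_T` begins or ends with an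
arrow of `T`. -/
def CondC1 (d : ℕ) (ρ : PathSet V) : Prop :=
  (∀ (v : V) (α : v ⟶ v), CondLoop d ρ α) ∧
  (∀ ⦃a : V⦄ (T : Quiver.Path a a), IsClosedTrail T → 1 < T.length → RhoTSub d ρ T →
    ∀ ⦃x y : V⦄ (q : Quiver.Path x y), ρ q → ¬(q.length = d ∧ LiesOn q T) →
      (∀ ⦃w : V⦄ (e : x ⟶ w) (q' : Quiver.Path w y),
          q = (Quiver.Hom.toPath e).comp q' → (⟨x, w, e⟩ : SArrow V) ∉ arrowList T) ∧
      (∀ ⦃w : V⦄ (e : w ⟶ y) (q' : Quiver.Path x w),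
          q = q'.comp (Quiver.Hom.toPath e) → (⟨w, y, e⟩ : SArrow V) ∉ arrowList T))

/-- Condition (C2): (1) for every `A`-loop `c`, some rotation `c'` of `c` satisfies
`c'^d ∈ ρ` and no element of `ρ` has the form `c'^{d-1}β` or `βc'^{d-1}` with
`β` a path of length `A` distinct from `c'`; (2) for every closed `A`-trail `T` with at
least two segments and `ρ_T ⊆ ρ`, no element of `ρ∖ρ_T` begins or ends with an
`A`-segment of `T`. -/
def CondC2 (D A d : ℕ) (ρ : PathSet V) : Prop :=
  (∀ ⦃v : V⦄ (c : Quiver.Path v v), c.length = A →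
    ∃ (w : V) (p : Quiver.Path v w) (q : Quiver.Path w v), c = p.comp q ∧ p.length < A ∧
      ρ (cpow (q.comp p) d) ∧
      (∀ ⦃x : V⦄ (β : Quiver.Path w x), β.length = A →
          (⟨w, x, β⟩ : SPath V) ≠ ⟨w, w, q.comp p⟩ →
          ¬ ρ ((cpow (q.comp p) (d - 1)).comp β)) ∧
      (∀ ⦃x : V⦄ (β : Quiver.Path x w), β.length = A →
          (⟨x, w, β⟩ : SPath V) ≠ ⟨w, w, q.comp p⟩ →
          ¬ ρ (β.comp (cpow (q.comp p) (d - 1))))) ∧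
  (∀ ⦃a : V⦄ (T : Quiver.Path a a) (L : List (SPath V)),
      SegChain A L a a T → L.Nodup → 2 ≤ L.length → ARhoTSub D A ρ T →
      ∀ ⦃x y : V⦄ (q : Quiver.Path x y), ρ q → ¬(q.length = D ∧ ALiesOn A q T) →
        (∀ ⦃w : V⦄ (α : Quiver.Path x w) (q' : Quiver.Path w y),
            q = α.comp q' → (⟨x, w, α⟩ : SPath V) ∉ L) ∧
        (∀ ⦃w : V⦄ (α : Quiver.Path w y) (q' : Quiver.Path x w),
            q = q'.comp α → (⟨w, y, α⟩ : SPath V) ∉ L))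



lemma path_len_zero {a b : V} (p : Quiver.Path a b) (h : p.length = 0) :
    a = b ∧ HEq p (Quiver.Path.nil : Quiver.Path a a) := by
  cases p with
  | nil => exact ⟨rfl, HEq.rfl⟩
  | cons p e => simp at h

lemma comp_eq_len {a : V} :
    ∀ {c b b' : V} (x : Quiver.Path b c) (y : Quiver.Path b' c)
      (p : Quiver.Path a b) (q : Quiver.Path a b'),
      p.comp x = q.comp y → x.length = y.length → b = b' ∧ HEq p q ∧ HEq x y := by
  intro c b b' x
  induction x with
  | nil =>
    intro y p q h hl
    obtain ⟨hb, hy⟩ := path_len_zero y (by simpa using hl.symm)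
    subst hb
    have hy' : y = Quiver.Path.nil := eq_of_heq hy
    subst hy'
    simp only [Quiver.Path.comp_nil] at h
    exact ⟨rfl, heq_of_eq h, HEq.rfl⟩
  | cons x' e ih =>
    intro y p q h hl
    cases y with
    | nil => simp at hl
    | cons y' f =>
      rw [Quiver.Path.comp_cons, Quiver.Path.comp_cons] at h
      have hmid := Quiver.Path.obj_eq_of_cons_eq_cons h
      subst hmid
      have hpath : p.comp x' = q.comp y' := eq_of_heq (Quiver.Path.heq_of_cons_eq_cons h)
      have hhom : e = f := eq_of_heq (Quiver.Path.hom_heq_of_cons_eq_cons h)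
      have hl' : x'.length = y'.length := by
        simp only [Quiver.Path.length_cons] at hl; omega
      obtain ⟨hb, hpq, hxy⟩ := ih y' p q hpath hl'
      subst hb
      subst hhom
      exact ⟨rfl, hpq, heq_of_eq (by rw [eq_of_heq hxy])⟩

lemma split_suffix {a : V} {b : V} (p : Quiver.Path a b) (k : ℕ) (hk : k ≤ p.length) :
    ∃ (c : V) (p₁ : Quiver.Path a c) (p₂ : Quiver.Path c b),
      p = p₁.comp p₂ ∧ p₂.length = k := by
  induction k generalizing b p with
  | zero => exact ⟨b, p, Quiver.Path.nil, by simp, rfl⟩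
  | succ k ih =>
    cases p with
    | nil => simp at hk
    | cons p' e =>
      obtain ⟨c, p₁, p₂, heq, hlen⟩ := ih p' (by simp at hk; omega)
      exact ⟨c, p₁, p₂.cons e, by rw [heq, Quiver.Path.comp_cons], by simp [hlen]⟩

lemma split_prefix {a b : V} (p : Quiver.Path a b) (k : ℕ) (hk : k ≤ p.length) :
    ∃ (c : V) (p₁ : Quiver.Path a c) (p₂ : Quiver.Path c b),
      p = p₁.comp p₂ ∧ p₁.length = k := by
  obtain ⟨c, p₁, p₂, h, hl⟩ := split_suffix p (p.length - k) (by omega)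
  refine ⟨c, p₁, p₂, h, ?_⟩
  have := congrArg Quiver.Path.length h
  rw [Quiver.Path.length_comp] at this
  omega

lemma suffix_trans {a e x y : V} (P : Quiver.Path a x) (X : Quiver.Path x e)
    (Q : Quiver.Path a y) (Y : Quiver.Path y e) (h : P.comp X = Q.comp Y)
    (hl : Y.length ≤ X.length) :
    ∃ z : Quiver.Path x y, X = z.comp Y ∧ Q = P.comp z := by
  obtain ⟨c, z, X₂, hX, hX₂⟩ := split_suffix X Y.length hl
  have h' : (P.comp z).comp X₂ = Q.comp Y := by
    rw [Quiver.Path.comp_assoc, ← hX, h]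
  obtain ⟨hc, hPQ, hXY⟩ := comp_eq_len X₂ Y (P.comp z) Q h' hX₂
  subst hc
  exact ⟨z, by rw [hX, eq_of_heq hXY], (eq_of_heq hPQ).symm⟩

lemma deltaF_facts (d m : ℕ) (hd : 2 ≤ d) :
    d ≤ deltaF d (m+2) ∧ deltaF d (m+2) + 1 ≤ deltaF d (m+3) ∧
      deltaF d (m+3) + 1 ≤ deltaF d (m+2) + d := by
  rcases Nat.even_or_odd m with ⟨t, rfl⟩ | ⟨t, rfl⟩
  · have e2 : deltaF d (t+t+2) = (t+1) * d := by
      unfold deltaF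
      rw [if_pos (by omega)]
      congr 1; omega
    have e3 : deltaF d (t+t+3) = (t+1) * d + 1 := by
      unfold deltaF
      rw [if_neg (by omega)]
      congr 2; omega
    rw [e2, e3]
    have h1 : 1 * d ≤ (t+1) * d := Nat.mul_le_mul_right d (by omega)
    omega
  · have e2 : deltaF d (2*t+1+2) = (t+1) * d + 1 := by
      unfold deltaF
      rw [if_neg (by omega)]
      congr 2; omega
    have e3 : deltaF d (2*t+1+3) = (t+2) * d := by
      unfold deltaF
      rw [if_pos (by omega)]
      congr 1; omega
    rw [e2, e3]
    have h1 : 1 * d ≤ (t+1) * d := Nat.mul_le_mul_right d (by omega)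
    have h2 : (t+2) * d = (t+1) * d + d := by ring
    omega

lemma isAPath_of_mul (A : ℕ) : ∀ (k : ℕ) {a b : V} (p : Quiver.Path a b),
    p.length = A * k → IsAPath A p := by
  intro k
  induction k with
  | zero =>
    intro a b p hp
    rw [Nat.mul_zero] at hp
    cases p with
    | nil => exact ⟨[], SegChain.nil _⟩
    | cons p e => simp at hp
  | succ k ih =>
    intro a b p hp
    have hAk : A * (k+1) = A * k + A := by ring
    obtain ⟨c, p₁, p₂, heq, hl₁⟩ := split_prefix p A (by omega)
    have hl₂ : p₂.length = A * k := by
      have := congrArg Quiver.Path.length heq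
      rw [Quiver.Path.length_comp] at this
      omega
    obtain ⟨L, hL⟩ := ih p₂ hl₂
    exact ⟨⟨a, c, p₁⟩ :: L, by rw [heq]; exact SegChain.cons p₁ hl₁ hL⟩

/-- if moreover every element of `R^m` has length `Aδ(m)` for `m ≥ 2`, then
every `R ∈ R^n` (`n ≥ 2`) is an `A`-path, all its `A`-subpaths of `A`-length `d` belong
to `ρ`, and no other subpath of `R` of length `D` belongs to `ρ`. -/
theorem stmt_9 {V : Type u} [Quiver.{v + 1} V] [Fintype V] [∀ a b : V, Fintype (a ⟶ b)]
    (D A d : ℕ) (hd : 2 ≤ d) (hA : 1 ≤ A) (hD : D = d * A)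
    (ρ : PathSet V) (hDA : DAOverlapProperty D A ρ)
    (hRlen : ∀ m, 2 ≤ m → ∀ ⦃a b : V⦄ (p : Quiver.Path a b), RSet ρ m p →
      p.length = A * deltaF d m) :
    ∀ n, 2 ≤ n → ∀ ⦃a b : V⦄ (R : Quiver.Path a b), RSet ρ n R →
      IsAPath A R ∧
      (∀ ⦃x y : V⦄ (s : Quiver.Path x y), IsASubpath A s R → s.length = D → ρ s) ∧
      (∀ ⦃x y : V⦄ (s : Quiver.Path x y), IsSubpathP s R → s.length = D → ρ s →
        IsASubpath A s R) := by
  intro n hn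
  induction n, hn using Nat.le_induction with
  | base =>
    intro a b R hR
    have hρR : ρ R := hR
    have hlR : R.length = D := hDA.1 R hρR
    refine ⟨isAPath_of_mul A d R (by rw [hlR, hD, Nat.mul_comm]), ?_, ?_⟩
    · intro x y s hsub hlen
      obtain ⟨u', v', hcomp, -, -⟩ := hsub
      have hle : R.length = u'.length + (s.length + v'.length) := by
        rw [hcomp]; simp [Quiver.Path.length_comp]
      have hu0 : u'.length = 0 := by omega
      have hv0 : v'.length = 0 := by omega
      obtain ⟨hax, hu⟩ := path_len_zero u' hu0
      subst hax
      obtain ⟨hyb, hv⟩ := path_len_zero v' hv0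
      subst hyb
      have hu' : u' = Quiver.Path.nil := eq_of_heq hu
      have hv' : v' = Quiver.Path.nil := eq_of_heq hv
      subst hu'; subst hv'
      have hRs : R = s := by simpa using hcomp
      exact hRs ▸ hρR
    · intro x y s hsub hlen hρs
      obtain ⟨u', v', hcomp⟩ := hsub
      have hle : R.length = u'.length + (s.length + v'.length) := by
        rw [hcomp]; simp [Quiver.Path.length_comp]
      refine ⟨u', v', hcomp, ?_, isAPath_of_mul A d s (by rw [hlen, hD, Nat.mul_comm])⟩
      have hu0 : u'.length = 0 := by omega
      rw [hu0]
      exact dvd_zero A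
  | succ n hn IH =>
    obtain ⟨m, rfl⟩ : ∃ m, n = m + 2 := ⟨n - 2, by omega⟩
    intro a e R hR
    have hl1 : R.length = A * deltaF d (m+3) := hRlen (m+3) (by omega) R hR
    have hRm3 : RSet ρ (m+3) R := hR
    rw [RSet] at hRm3
    obtain ⟨c, R', u, hR', hRe, b, R'', p, hR'', hR'e, hex, -⟩ := hRm3
    obtain ⟨xq, q, hq, hov⟩ := hex
    obtain ⟨v, hpu, -, -⟩ := hov
    have hl2 : R'.length = A * deltaF d (m+2) := hRlen (m+2) (by omega) R' hR'
    obtain ⟨hdd, hd1, hd2⟩ := deltaF_facts d m hd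
    set δ2 := deltaF d (m+2) with hδ2
    set δ3 := deltaF d (m+3) with hδ3
    set K := δ3 - δ2 with hKdef
    have hmulK : A * δ2 + A * K = A * δ3 := by rw [← Nat.mul_add]; congr 1; omega
    have hlRu : R.length = R'.length + u.length := by rw [hRe, Quiver.Path.length_comp]
    have hlu : u.length = A * K := by omega
    have hADle : A * 1 ≤ A * K := Nat.mul_le_mul_left A (by omega)
    have hA1 : A * 1 = A := Nat.mul_one A
    have hDeq : A * d = D := by rw [hD, Nat.mul_comm]
    have hDR' : D ≤ R'.length := by
      have := Nat.mul_le_mul_left A hdd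
      omega
    have huD : u.length + A ≤ D := by
      have h1 : A * (K + 1) ≤ A * d := Nat.mul_le_mul_left A (by omega)
      have h2 : A * (K + 1) = A * K + A := by ring
      omega
    have hAD : A ≤ D := by omega
    have hlq : q.length = D := hDA.1 q hq
    have hRq : R = (R''.comp v).comp q := by
      rw [hRe, hR'e, Quiver.Path.comp_assoc, hpu, ← Quiver.Path.comp_assoc]
    obtain ⟨hP1', hP2', hP3'⟩ := IH R' hR'
    obtain ⟨c₀, c₁, c₂, hR's, hc₂⟩ := split_suffix R' D hDR'
    have hc₁ : c₁.length + D = R'.length := by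
      have := congrArg Quiver.Path.length hR's
      rw [Quiver.Path.length_comp] at this
      omega
    have hρc₂ : ρ c₂ := by
      refine hP2' c₂ ⟨c₁, Quiver.Path.nil,
        by rw [Quiver.Path.comp_nil]; exact hR's, ?_,
        isAPath_of_mul A d c₂ (by omega)⟩ hc₂
      refine ⟨δ2 - d, ?_⟩
      have h3 : A * (δ2 - d) + A * d = A * δ2 := by rw [← Nat.mul_add]; congr 1; omega
      omega
    have key : ∀ j : ℕ, ∀ {x y : V} (w₁ : Quiver.Path a x) (s : Quiver.Path x y)
        (w₂ : Quiver.Path y e), R = (w₁.comp s).comp w₂ → s.length = D →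
        w₂.length = u.length - A * j → A * j ≤ u.length → ρ s := by
      intro j
      induction j with
      | zero =>
        intro x y w₁ s w₂ hsplit hls hlw₂ _
        have hlw₂' : u.length = w₂.length := by omega
        obtain ⟨hyc, hh1, -⟩ :=
          comp_eq_len u w₂ R' (w₁.comp s) (hRe.symm.trans hsplit) hlw₂'
        subst hyc
        have hR'w : R' = w₁.comp s := eq_of_heq hh1
        obtain ⟨hxc, -, hh2⟩ := comp_eq_len c₂ s c₁ w₁ (hR's.symm.trans hR'w) (by omega)
        subst hxc
        rw [← eq_of_heq hh2]
        exact hρc₂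
      | succ j ihj =>
        intro x y w₁ s w₂ hsplit hls hlw₂ hjA
        have hmsj : A * (j+1) = A * j + A := by ring
        have hlenR : R.length = w₁.length + (s.length + w₂.length) := by
          rw [hsplit]; simp [Quiver.Path.length_comp]
        have hw₁A : A ≤ w₁.length := by omega
        obtain ⟨x₁e, x₁, x₂, hw₁e, hx₂⟩ := split_suffix w₁ A hw₁A
        obtain ⟨mid, s₁, s₂, hse, hs₁⟩ := split_prefix s (D - A) (by omega)
        have hs₂ : s₂.length = A := by
          have := congrArg Quiver.Path.length hse
          rw [Quiver.Path.length_comp] at this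
          omega
        have hsplit' : R = ((x₁.comp (x₂.comp s₁)).comp (s₂.comp w₂)) := by
          rw [hsplit, hw₁e, hse]
          simp only [Quiver.Path.comp_assoc]
        have hρprev : ρ (x₂.comp s₁) := by
          refine ihj x₁ (x₂.comp s₁) (s₂.comp w₂) hsplit' ?_ ?_ (by omega)
          · rw [Quiver.Path.length_comp]; omega
          · rw [Quiver.Path.length_comp]; omega
        have hsplit'' : R = x₁.comp ((x₂.comp s₁).comp (s₂.comp w₂)) := by
          rw [hsplit']; simp only [Quiver.Path.comp_assoc]
        obtain ⟨z, hXz, -⟩ := suffix_trans x₁ ((x₂.comp s₁).comp (s₂.comp w₂))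
          (R''.comp v) q (hsplit''.symm.trans hRq)
          (by simp only [Quiver.Path.length_comp]; omega)
        have hzlen : z.length + q.length =
            (x₂.comp s₁).length + (s₂.comp w₂).length := by
          have := congrArg Quiver.Path.length hXz
          simp only [Quiver.Path.length_comp] at this
          simp only [Quiver.Path.length_comp]
          omega
        simp only [Quiver.Path.length_comp] at hzlen
        have hpow' : ProperlyOverlapsWith q (x₂.comp s₁) (s₂.comp w₂) := by
          refine ⟨z, hXz, ?_, ?_, ?_⟩
          · rw [Quiver.Path.length_comp]; omega
          · rw [Quiver.Path.length_comp]; omega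
          · omega
        obtain ⟨-, y', x', R₃, u', hρR₃, hpow, hu'len, hu'pre⟩ :=
          hDA.2 (x₂.comp s₁) q (s₂.comp w₂) hρprev hq hpow'
        obtain ⟨rest, hrest⟩ : ∃ rest, s₂.comp w₂ = u'.comp rest := hu'pre
        have hlrest : w₂.length = rest.length := by
          have := congrArg Quiver.Path.length hrest
          simp only [Quiver.Path.length_comp] at this
          omega
        obtain ⟨hmid2, hs₂u', -⟩ := comp_eq_len w₂ rest s₂ u' hrest hlrest
        subst hmid2
        have hu'eq : s₂ = u' := eq_of_heq hs₂u'
        obtain ⟨v₃, hv₃, -, -, -⟩ :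
            ∃ v₃ : Quiver.Path x₁e x', (x₂.comp s₁).comp u' = v₃.comp R₃ ∧ 1 ≤ u'.length ∧
              u'.length < R₃.length ∧ 1 ≤ v₃.length := hpow
        have hlR₃ : R₃.length = D := hDA.1 R₃ hρR₃
        have hveq : x₂.comp s = v₃.comp R₃ := by
          rw [hse, ← Quiver.Path.comp_assoc, hu'eq, hv₃]
        obtain ⟨hxx', -, hsR₃⟩ := comp_eq_len s R₃ x₂ v₃ hveq (by omega)
        subst hxx'
        rw [eq_of_heq hsR₃]
        exact hρR₃
    refine ⟨isAPath_of_mul A δ3 R hl1, ?_, ?_⟩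
    · intro x y s hsub hlen
      obtain ⟨u', v', hcomp, hdvd, hap⟩ := hsub
      have hlenR : R.length = u'.length + (s.length + v'.length) := by
        rw [hcomp]; simp [Quiver.Path.length_comp]
      by_cases hcase : u.length ≤ v'.length
      · obtain ⟨z, hz1, hz2⟩ := suffix_trans (u'.comp s) v' R' u
          (hcomp.symm.trans hRe) hcase
        exact hP2' s ⟨u', z, hz2, hdvd, hap⟩ hlen
      · push_neg at hcase
        obtain ⟨ku, hku⟩ := hdvd
        have hkud : ku + d ≤ δ3 := by
          have h6 : A * (ku + d) = A * ku + A * d := by ring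
          have h5 : A * (ku + d) ≤ A * δ3 := by omega
          exact Nat.le_of_mul_le_mul_left h5 (by omega)
        have hdvv' : A ∣ v'.length := by
          refine ⟨δ3 - ku - d, ?_⟩
          have h4 : A * (δ3 - ku - d) + A * (ku + d) = A * δ3 := by
            rw [← Nat.mul_add]; congr 1; omega
          have h6 : A * (ku + d) = A * ku + A * d := by ring
          omega
        obtain ⟨kv, hkv⟩ := hdvv'
        have hkvK : kv < K := by
          have h7 : A * kv < A * K := by omega
          exact Nat.lt_of_mul_lt_mul_left h7
        have hAjk : A * (K - kv) + A * kv = A * K := by rw [← Nat.mul_add]; congr 1; omega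
        exact key (K - kv) u' s v' hcomp hlen (by omega) (by omega)
    · intro x y s hsub hlen hρs
      obtain ⟨u', v', hcomp⟩ := hsub
      have hlenR : R.length = u'.length + (s.length + v'.length) := by
        rw [hcomp]; simp [Quiver.Path.length_comp]
      by_cases hcase : u.length ≤ v'.length
      · obtain ⟨z, hz1, hz2⟩ := suffix_trans (u'.comp s) v' R' u
          (hcomp.symm.trans hRe) hcase
        obtain ⟨w₁, w₂, hR'2, hdvd, hap⟩ := hP3' s ⟨u', z, hz2⟩ hlen hρs
        refine ⟨w₁, w₂.comp u, ?_, hdvd, hap⟩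
        rw [hRe, hR'2]
        simp only [Quiver.Path.comp_assoc]
      · push_neg at hcase
        by_cases hr : v'.length % A = 0
        · have hdvv' : A ∣ v'.length := Nat.dvd_of_mod_eq_zero hr
          obtain ⟨kv, hkv⟩ := hdvv'
          refine ⟨u', v', hcomp, ?_, isAPath_of_mul A d s (by omega)⟩
          have hk2 : kv + d ≤ δ3 := by
            have h6 : A * (kv + d) = A * kv + A * d := by ring
            have h5 : A * (kv + d) ≤ A * δ3 := by omega
            exact Nat.le_of_mul_le_mul_left h5 (by omega)
          refine ⟨δ3 - d - kv, ?_⟩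
          have h4 : A * (δ3 - d - kv) + A * (kv + d) = A * δ3 := by
            rw [← Nat.mul_add]; congr 1; omega
          have h6 : A * (kv + d) = A * kv + A * d := by ring
          omega
        · exfalso
          set r := v'.length % A with hrdef
          have hrA : r < A := Nat.mod_lt _ (by omega)
          have hdm : A * (v'.length / A) + r = v'.length := Nat.div_add_mod v'.length A
          set t := v'.length / A + 1 with htdef
          have hqlt : v'.length / A < K := by
            by_contra hc
            push_neg at hc
            have := Nat.mul_le_mul_left A hc
            omega
          have hAt : A * t = A * (v'.length / A) + A := by rw [htdef]; ring
          have hAjt : A * (K - t) + A * t = A * K := by rw [← Nat.mul_add]; congr 1; omega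
          have hu'ge : A - r ≤ u'.length := by omega
          obtain ⟨xu, u₁, u₂, hu'e, hu₂⟩ := split_suffix u' (A - r) hu'ge
          obtain ⟨ms, s₁, s₂, hse, hs₁⟩ := split_prefix s (D - (A - r)) (by omega)
          have hs₂ : s₂.length = A - r := by
            have := congrArg Quiver.Path.length hse
            rw [Quiver.Path.length_comp] at this
            omega
          have hsplitJ : R = (u₁.comp (u₂.comp s₁)).comp (s₂.comp v') := by
            rw [hcomp, hu'e, hse]
            simp only [Quiver.Path.comp_assoc]
          have hρsj : ρ (u₂.comp s₁) := by
            refine key (K - t) u₁ (u₂.comp s₁) (s₂.comp v') hsplitJ ?_ ?_ (by omega)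
            · rw [Quiver.Path.length_comp]; omega
            · rw [Quiver.Path.length_comp]; omega
          have hover : ProperlyOverlapsWith s (u₂.comp s₁) s₂ := by
            refine ⟨u₂, ?_, ?_, ?_, ?_⟩
            · rw [Quiver.Path.comp_assoc, ← hse]
            · omega
            · omega
            · omega
          obtain ⟨hge, -⟩ := hDA.2 (u₂.comp s₁) s s₂ hρsj hρs hover
          omega
end

section
/- Let Q be a finite quiver, let D = dA with d ≥ 2 and A ≥ 1, and let ρ be a set of paths of Q satisfying the (D,A)-overlap property. Let T = α_1⋯α_n be a closed A-trail with each α_i ∈ Q_A and d ≥ n+1. Assume there exist A-paths T′ and T″ such that T′T ∈ ρ and TT″ ∈ ρ, and that some element of ρ is a subpath of a power of T (as is automatic when KQ/(ρ) is finite dimensional). Then every A-subpath of A-length d of every power of T belongs to ρ. -/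
open Quiver

universe u v

variable {V : Type u} [Quiver.{v + 1} V]

section Aux10

variable {V : Type u} [Quiver.{v + 1} V]

lemma cpow_length' {a : V} (T : Quiver.Path a a) : ∀ k, (cpow T k).length = k * T.length
  | 0 => by simp [cpow]
  | k + 1 => by
      rw [cpow, Quiver.Path.length_comp, cpow_length' T k]; ring

lemma cpow_add' {a : V} (T : Quiver.Path a a) (j : ℕ) :
    ∀ k, cpow T (j + k) = (cpow T j).comp (cpow T k)
  | 0 => by
      show cpow T j = (cpow T j).comp (cpow T 0)
      rw [show cpow T 0 = Quiver.Path.nil from rfl, Quiver.Path.comp_nil]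
  | k + 1 => by
      show cpow T ((j + k) + 1) = _
      rw [cpow, cpow, cpow_add' T j k, Quiver.Path.comp_assoc]

lemma cpow_succ'' {a : V} (T : Quiver.Path a a) (k : ℕ) :
    cpow T (k + 1) = T.comp (cpow T k) := by
  have h := cpow_add' T 1 k
  rw [Nat.add_comm 1 k] at h
  rw [h]
  congr 1
  show (cpow T 0).comp T = T
  rw [cpow, Quiver.Path.nil_comp]

lemma path_split' {a c : V} (q : Quiver.Path a c) : ∀ (j : ℕ), j ≤ q.length →
    ∃ (b : V) (p : Quiver.Path a b) (r : Quiver.Path b c), q = p.comp r ∧ p.length = j := by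
  induction q with
  | nil =>
      intro j hj
      refine ⟨a, Quiver.Path.nil, Quiver.Path.nil, ?_, ?_⟩
      · rw [Quiver.Path.comp_nil]
      · simpa using (Nat.le_zero.mp hj).symm
  | cons q' e ih =>
      intro j hj
      rcases Nat.lt_or_ge j (q'.cons e).length with hlt | hge
      · have hj' : j ≤ q'.length := by
          have : (q'.cons e).length = q'.length + 1 := rfl
          omega
        obtain ⟨b, p, r, rfl, hp⟩ := ih j hj'
        exact ⟨b, p, r.cons e, by rw [Quiver.Path.comp_cons], hp⟩
      · refine ⟨_, q'.cons e, Quiver.Path.nil, ?_, ?_⟩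
        · rw [Quiver.Path.comp_nil]
        · omega

lemma comp_heq' {a c : V} : ∀ {b₁ b₂ : V} (p₁ : Quiver.Path a b₁) (r₁ : Quiver.Path b₁ c)
    (p₂ : Quiver.Path a b₂) (r₂ : Quiver.Path b₂ c),
    p₁.comp r₁ = p₂.comp r₂ → p₁.length = p₂.length →
    b₁ = b₂ ∧ HEq p₁ p₂ ∧ HEq r₁ r₂ := by
  intro b₁ b₂ p₁ r₁
  induction r₁ generalizing b₂ with
  | nil =>
      intro p₂ r₂ h hl
      cases r₂ with
      | nil =>
          rw [Quiver.Path.comp_nil, Quiver.Path.comp_nil] at h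
          exact ⟨rfl, heq_of_eq h, HEq.rfl⟩
      | cons r₂' f =>
          exfalso
          have hlen := congrArg Quiver.Path.length h
          rw [Quiver.Path.comp_nil, Quiver.Path.length_comp] at hlen
          have : (r₂'.cons f).length = r₂'.length + 1 := rfl
          omega
  | cons r₁' e ih =>
      intro p₂ r₂ h hl
      cases r₂ with
      | nil =>
          exfalso
          have hlen := congrArg Quiver.Path.length h
          rw [Quiver.Path.comp_nil, Quiver.Path.length_comp] at hlen
          have : (r₁'.cons e).length = r₁'.length + 1 := rfl
          omega
      | cons r₂' f =>
          rw [Quiver.Path.comp_cons, Quiver.Path.comp_cons] at h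
          injection h with hb hc hp he
          subst hb
          obtain ⟨h4, h5, h6⟩ := ih _ _ (eq_of_heq hp) hl
          subst h4
          obtain rfl := eq_of_heq h6
          obtain rfl := eq_of_heq he
          exact ⟨rfl, h5, HEq.rfl⟩

/-- `s` occurs in `q` at offset `o`. -/
def SubAt {a e x y : V} (q : Quiver.Path a e) (o : ℕ) (s : Quiver.Path x y) : Prop :=
  ∃ (p : Quiver.Path a x) (r : Quiver.Path y e), q = (p.comp s).comp r ∧ p.length = o

lemma subAt_le {a e x y : V} {q : Quiver.Path a e} {o : ℕ} {s : Quiver.Path x y}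
    (h : SubAt q o s) : o + s.length ≤ q.length := by
  obtain ⟨p, r, rfl, hp⟩ := h
  rw [Quiver.Path.length_comp, Quiver.Path.length_comp]
  omega

lemma subAt_unique {a e x₁ y₁ x₂ y₂ : V} {q : Quiver.Path a e} {o : ℕ}
    {s₁ : Quiver.Path x₁ y₁} {s₂ : Quiver.Path x₂ y₂}
    (h₁ : SubAt q o s₁) (h₂ : SubAt q o s₂) (hl : s₁.length = s₂.length) :
    (⟨x₁, y₁, s₁⟩ : SPath V) = ⟨x₂, y₂, s₂⟩ := by
  obtain ⟨p₁, r₁, rfl, hp₁⟩ := h₁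
  obtain ⟨p₂, r₂, he, hp₂⟩ := h₂
  obtain ⟨hb, hq, hr⟩ := comp_heq' (p₁.comp s₁) r₁ (p₂.comp s₂) r₂ he
    (by rw [Quiver.Path.length_comp, Quiver.Path.length_comp]; omega)
  subst hb
  obtain ⟨hb2, hq2, hr2⟩ := comp_heq' p₁ s₁ p₂ s₂ (eq_of_heq hq) (by omega)
  subst hb2
  rw [eq_of_heq hr2]

lemma rho_congr (ρ : PathSet V) {a b a' b' : V} {p : Quiver.Path a b} {p' : Quiver.Path a' b'}
    (h : (⟨a, b, p⟩ : SPath V) = ⟨a', b', p'⟩) (hp : ρ p) : ρ p' := by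
  injection h with h1 h2
  subst h1
  injection eq_of_heq h2 with h3 h4
  subst h3
  obtain rfl := eq_of_heq h4
  exact hp

lemma subAt_extend {a e f x y : V} {q : Quiver.Path a e} {o : ℕ} {s : Quiver.Path x y}
    (t : Quiver.Path e f) (h : SubAt q o s) : SubAt (q.comp t) o s := by
  obtain ⟨p, r, rfl, hp⟩ := h
  exact ⟨p, r.comp t, by rw [Quiver.Path.comp_assoc], hp⟩

lemma subAt_shift {a' a e x y : V} (w : Quiver.Path a' a) {q : Quiver.Path a e} {o : ℕ}
    {s : Quiver.Path x y} (h : SubAt q o s) : SubAt (w.comp q) (w.length + o) s := by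
  obtain ⟨p, r, rfl, hp⟩ := h
  refine ⟨w.comp p, r, ?_, ?_⟩
  · simp only [Quiver.Path.comp_assoc]
  · rw [Quiver.Path.length_comp, hp]

lemma subAt_congr_offset {a e x y : V} {q : Quiver.Path a e} {o o' : ℕ} {s : Quiver.Path x y}
    (h : SubAt q o s) (ho : o = o') : SubAt q o' s := ho ▸ h

lemma subAt_comp_right {a e x x' y : V} {q : Quiver.Path a e} {o : ℕ} {v : Quiver.Path x x'}
    {s : Quiver.Path x' y} (h : SubAt q o (v.comp s)) : SubAt q (o + v.length) s := by
  obtain ⟨p, r, he, hp⟩ := h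
  refine ⟨p.comp v, r, ?_, ?_⟩
  · rw [he]; simp only [Quiver.Path.comp_assoc]
  · rw [Quiver.Path.length_comp, hp]

lemma subAt_exists {a e : V} (q : Quiver.Path a e) (o l : ℕ) (h : o + l ≤ q.length) :
    ∃ (x y : V) (s : Quiver.Path x y), SubAt q o s ∧ s.length = l := by
  obtain ⟨x, p, r, rfl, hp⟩ := path_split' q o (by omega)
  have hr : l ≤ r.length := by
    have := Quiver.Path.length_comp p r
    omega
  obtain ⟨y, s, r', rfl, hs⟩ := path_split' r l hr
  exact ⟨x, y, s, ⟨p, r', (Quiver.Path.comp_assoc p s r').symm, hp⟩, hs⟩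

lemma overlap_of_subAt {a e x y x' y' : V} {P : Quiver.Path a e} {o₁ o₂ : ℕ}
    {S : Quiver.Path x y} {R : Quiver.Path x' y'}
    (h₁ : SubAt P o₁ S) (h₂ : SubAt P o₂ R) (hlen : S.length = R.length)
    (hlt : o₁ < o₂) (hend : o₂ + R.length ≤ P.length) :
    ∃ (u : Quiver.Path y y') (v : Quiver.Path x x'),
      S.comp u = v.comp R ∧ u.length = o₂ - o₁ ∧ v.length = o₂ - o₁ ∧
      (∀ ⦃z : V⦄ (u'' : Quiver.Path y z), IsPrefixP u'' u → SubAt P o₁ (S.comp u'')) := by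
  obtain ⟨p₁, r₁, hP₁, hp₁⟩ := h₁
  obtain ⟨p₂, r₂, hP₂, hp₂⟩ := h₂
  have hr₁len : o₂ - o₁ ≤ r₁.length := by
    have h := congrArg Quiver.Path.length hP₁
    rw [Quiver.Path.length_comp, Quiver.Path.length_comp] at h
    omega
  obtain ⟨z, u, r₁', hre, hu⟩ := path_split' r₁ (o₂ - o₁) hr₁len
  subst hre
  have hP₁' : P = (p₁.comp (S.comp u)).comp r₁' := by
    rw [hP₁]; simp only [Quiver.Path.comp_assoc]
  obtain ⟨hb, hq, hr⟩ := comp_heq' _ r₁' _ r₂ (hP₁'.symm.trans hP₂)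
    (by rw [Quiver.Path.length_comp, Quiver.Path.length_comp, Quiver.Path.length_comp]; omega)
  subst hb
  have hq' := eq_of_heq hq
  obtain ⟨ww, v₀, v, hsp, hv₀⟩ := path_split' p₂ o₁ (by omega)
  subst hsp
  rw [Quiver.Path.comp_assoc] at hq'
  obtain ⟨hb2, hq2, hr2⟩ := comp_heq' p₁ (S.comp u) v₀ (v.comp R) hq' (by omega)
  subst hb2
  have hmain := eq_of_heq hr2
  have hvlen : v.length = o₂ - o₁ := by
    have := Quiver.Path.length_comp v₀ v
    omega
  refine ⟨u, v, hmain, hu, hvlen, ?_⟩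
  rintro zz u'' ⟨uw, rfl⟩
  refine ⟨p₁, uw.comp r₁', ?_, hp₁⟩
  rw [hP₁']; simp only [Quiver.Path.comp_assoc]

lemma segchain_length' {A : ℕ} : ∀ {L : List (SPath V)} {a b : V} {p : Quiver.Path a b},
    SegChain A L a b p → p.length = L.length * A := by
  intro L a b p h
  induction h with
  | nil => simp
  | cons α hα hp ih =>
      rw [Quiver.Path.length_comp]
      simp [hα, ih]
      ring

end Aux10

section Aux10b
variable {V : Type u} [Quiver.{v + 1} V]

lemma subAt_pmono {w a x y : V} (T' : Quiver.Path w a) (T : Quiver.Path a a) {M M' o : ℕ}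
    {s : Quiver.Path x y} (hMM : M ≤ M') (h : SubAt (T'.comp (cpow T M)) o s) :
    SubAt (T'.comp (cpow T M')) o s := by
  obtain ⟨c, rfl⟩ := Nat.exists_eq_add_of_le hMM
  rw [cpow_add', ← Quiver.Path.comp_assoc]
  exact subAt_extend _ h

end Aux10b


/-- if `T` is a closed `A`-trail of `A`-length `n` with `d ≥ n + 1` which
is the prefix of an element of `ρ` and the suffix of an element of `ρ`, and some element
of `ρ` is a subpath of a power of `T`, then every `A`-subpath of `A`-length `d` of every
power of `T` belongs to `ρ`. -/
theorem stmt_10 {V : Type u} [Quiver.{v + 1} V] [Fintype V] [∀ a b : V, Fintype (a ⟶ b)]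
    (D A d : ℕ) (hd : 2 ≤ d) (hA : 1 ≤ A) (hD : D = d * A)
    (ρ : PathSet V) (hDA : DAOverlapProperty D A ρ)
    {u : V} (T : Quiver.Path u u) (L : List (SPath V))
    (hseg : SegChain A L u u T) (hnodup : L.Nodup) (hL : 1 ≤ L.length)
    (hdn : L.length + 1 ≤ d)
    (hpre : ∃ (w : V) (T' : Quiver.Path w u), IsAPath A T' ∧ ρ (T'.comp T))
    (hsuf : ∃ (w : V) (T'' : Quiver.Path u w), IsAPath A T'' ∧ ρ (T.comp T''))
    (hex : ∃ (x y : V) (s : Quiver.Path x y), ρ s ∧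
      ∃ m, 1 ≤ m ∧ IsSubpathP s (cpow T m)) :
    ∀ m, 1 ≤ m → ∀ ⦃x y : V⦄ (s : Quiver.Path x y),
      IsASubpath A s (cpow T m) → s.length = D → ρ s := by
  obtain ⟨hlen, hover⟩ := hDA
  obtain ⟨w, T', hT'A, hT'T⟩ := hpre
  obtain ⟨x₀, y₀, R, hRρ, m₀, hm₀, hRsub⟩ := hex
  have hTlen : T.length = L.length * A := segchain_length' hseg
  have hRlen : R.length = D := hlen _ hRρ
  have hT'Tlen : (T'.comp T).length = D := hlen _ hT'T
  have hBna : T'.length + L.length * A = D := by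
    have h := hT'Tlen
    rw [Quiver.Path.length_comp, hTlen] at h
    exact h
  have hBval : T'.length = (d - L.length) * A := by
    have h1 : (d - L.length) * A + L.length * A = d * A := by
      rw [← Nat.add_mul, Nat.sub_add_cancel (by omega : L.length ≤ d)]
    have h2 := hBna
    rw [hD] at h2
    exact Nat.add_right_cancel (h2.trans h1.symm)
  have hDge : L.length * A + A ≤ D := by
    rw [hD]
    calc L.length * A + A = (L.length + 1) * A := (Nat.succ_mul _ _).symm
      _ ≤ d * A := Nat.mul_le_mul_right A hdn
  have hnapos : 1 ≤ L.length * A := Nat.mul_pos (by omega) (by omega)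
  have hAna : A ≤ L.length * A := Nat.le_mul_of_pos_left A (by omega)
  obtain ⟨na, hna⟩ : ∃ x, L.length * A = x := ⟨_, rfl⟩
  rw [hna] at hTlen hBna hDge hnapos hAna
  -- reduce the offset of R below na
  have reduce : ∀ (t m : ℕ) {x y : V} (R : Quiver.Path x y), SubAt (cpow T m) t R →
      ∃ m' t', t' < na ∧ SubAt (cpow T m') t' R := by
    intro t
    induction t using Nat.strong_induction_on with
    | _ t ihred =>
      intro m x y R hsub
      by_cases hcase : t < na
      · exact ⟨m, t, hcase, hsub⟩
      · push_neg at hcase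
        cases m with
        | zero =>
            exfalso
            have h := subAt_le hsub
            have h0 : (cpow T 0).length = 0 := rfl
            omega
        | succ m'' =>
            obtain ⟨p, r, hPe, hp⟩ := hsub
            obtain ⟨z, p₁, p₂, rfl, hp₁⟩ := path_split' p na (by omega)
            rw [cpow_succ''] at hPe
            have hPe' : T.comp (cpow T m'') = p₁.comp ((p₂.comp R).comp r) := by
              rw [hPe]; simp only [Quiver.Path.comp_assoc]
            obtain ⟨hb, -, hr⟩ := comp_heq' T (cpow T m'') p₁ _ hPe' (by rw [hTlen, hp₁])
            subst hb
            have hEq := eq_of_heq hr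
            have hp₂ : p₂.length = t - na := by
              have h := Quiver.Path.length_comp p₁ p₂
              omega
            exact ihred (t - na) (by omega) m'' R ⟨p₂, r, hEq, hp₂⟩
  have hred : ∃ m' t', t' < na ∧ SubAt (cpow T m') t' R := by
    obtain ⟨uu, vv, hvv⟩ := hRsub
    exact reduce uu.length m₀ R ⟨uu, vv, hvv, rfl⟩
  obtain ⟨mR, tR, htR, hRat⟩ := hred
  -- main induction
  have Phi : ∀ k : ℕ, ∃ (M : ℕ) (x y : V) (s : Quiver.Path x y),
      SubAt (T'.comp (cpow T M)) (k * A) s ∧ s.length = D ∧ ρ s := by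
    intro k
    induction k with
    | zero =>
        refine ⟨1, _, _, T'.comp T, subAt_congr_offset ⟨Quiver.Path.nil, Quiver.Path.nil, ?_, rfl⟩
          (Nat.zero_mul A).symm, hT'Tlen, hT'T⟩
        rw [Quiver.Path.nil_comp, Quiver.Path.comp_nil]
        have hc1 : cpow T 1 = T := by
          rw [cpow_succ'']; exact Quiver.Path.comp_nil T
        rw [hc1]
    | succ k ih =>
        obtain ⟨M, xS, yS, S, hSat, hSlen, hSρ⟩ := ih
        obtain ⟨ka, hka⟩ : ∃ x, k * A = x := ⟨_, rfl⟩
        rw [hka] at hSat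
        obtain ⟨o₀, ho₀⟩ : ∃ x_, T'.length + tR = x_ := ⟨_, rfl⟩
        obtain ⟨X, hX⟩ : ∃ x_, ka + D - 1 - o₀ = x_ := ⟨_, rfl⟩
        obtain ⟨c, hc⟩ : ∃ x_, X / na = x_ := ⟨_, rfl⟩
        have hdm := Nat.div_add_mod X na
        have hxr : X % na < na := Nat.mod_lt X (by omega)
        obtain ⟨xr, hxrdef⟩ : ∃ x_, X % na = x_ := ⟨_, rfl⟩
        rw [hc, hxrdef] at hdm
        rw [hxrdef] at hxr
        obtain ⟨P1, hP1⟩ : ∃ x_, na * c = x_ := ⟨_, rfl⟩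
        rw [hP1] at hdm
        obtain ⟨r', hr'⟩ : ∃ x_, o₀ + P1 = x_ := ⟨_, rfl⟩
        have hr'lb : ka + 1 ≤ r' := by omega
        have hr'ub : r' ≤ ka + D - 1 := by omega
        obtain ⟨Mb, hMbdef⟩ : ∃ x_, M + (c + mR) + r' + D + 1 = x_ := ⟨_, rfl⟩
        have hPlen : (T'.comp (cpow T Mb)).length = T'.length + Mb * na := by
          rw [Quiver.Path.length_comp, cpow_length', hTlen]
        obtain ⟨MB1, hMB1⟩ : ∃ x, Mb * na = x := ⟨_, rfl⟩
        have hMB1ge : Mb ≤ MB1 := by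
          rw [← hMB1]; exact Nat.le_mul_of_pos_right Mb (by omega)
        rw [hMB1] at hPlen
        have hS : SubAt (T'.comp (cpow T Mb)) ka S := subAt_pmono T' T (by omega) hSat
        have hR1 : SubAt ((cpow T c).comp (cpow T mR)) ((cpow T c).length + tR) R :=
          subAt_shift _ hRat
        rw [← cpow_add'] at hR1
        have hR2 : SubAt (T'.comp (cpow T (c + mR)))
            (T'.length + ((cpow T c).length + tR)) R := subAt_shift T' hR1
        have hR3 : SubAt (T'.comp (cpow T Mb)) r' R := by
          refine subAt_pmono T' T (by omega) (subAt_congr_offset hR2 ?_)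
          rw [cpow_length', hTlen, Nat.mul_comm c na, hP1]
          omega

        obtain ⟨uu, vv, hEq, huu, hvv, hPref⟩ := overlap_of_subAt hS hR3
          (hSlen.trans hRlen.symm) (by omega) (by rw [hRlen, hPlen]; omega)
        have hPO : ProperlyOverlapsWith R S uu :=
          ⟨vv, hEq, by omega, by rw [hRlen]; omega, by omega⟩
        obtain ⟨-, y'', x'', R₃, u', hR₃ρ, hPO', hu'len, hu'pre⟩ := hover S R uu hSρ hRρ hPO
        obtain ⟨v', hEq', -, -, -⟩ := hPO'
        have hR₃len : R₃.length = D := hlen _ hR₃ρ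
        have hv'len : v'.length = A := by
          have h := congrArg Quiver.Path.length hEq'
          rw [Quiver.Path.length_comp, Quiver.Path.length_comp, hSlen, hu'len, hR₃len] at h
          omega
        have hsc := hPref u' hu'pre
        rw [hEq'] at hsc
        have hfin := subAt_comp_right hsc
        refine ⟨Mb, _, _, R₃, subAt_congr_offset hfin ?_, hR₃len, hR₃ρ⟩
        rw [hv'len, Nat.succ_mul, hka]
  -- conclusion
  intro m hm x y s hsub hslen
  obtain ⟨wpre, vpost, hdec, ⟨j, hj⟩, -⟩ := hsub
  have hs1 : SubAt (cpow T m) wpre.length s := ⟨wpre, vpost, hdec, rfl⟩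
  have hs2 := subAt_shift T' hs1
  have hs3 : SubAt (T'.comp (cpow T m)) ((d - L.length + j) * A) s :=
    subAt_congr_offset hs2 (by rw [hj, hBval, Nat.add_mul, Nat.mul_comm A j])
  obtain ⟨M, x', y', s', hs'at, hs'len, hs'ρ⟩ := Phi (d - L.length + j)
  have h1 := subAt_pmono T' T (Nat.le_add_right M m) hs'at
  have h2 := subAt_pmono T' T (Nat.le_add_left m M) hs3
  exact rho_congr ρ (subAt_unique h1 h2 (hs'len.trans hslen.symm)) hs'ρ
end
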